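/- Let M be a probability measure on a measurable space X, let η : X → [0,1] be measurable, let f : X → [0,1] be measurable with f(x) ≤ ρ_max for all x, where ρ_max < 1/2, and let η̄(x) = (1 − 2f(x))·η(x) + f(x). Let ℓ₁, ℓ₋₁ : ℝ → [0,∞) satisfy ℓ₁(v) + ℓ₋₁(v) = C for all v, and L(p,v) = p·ℓ₁(v) + (1−p)·ℓ₋₁(v). Suppose s* : X → ℝ is pointwise Bayes-optimal for the corrupted distribution, i.e. L(η̄(x), s*(x)) ≤ L(η̄(x), v) for all x ∈ X and v ∈ ℝ. Then for any measurable scorer s : X → ℝ for which all the risks below are finite, ∫ L(η(x), s(x)) dM − ∫ L(η(x), s*(x)) dM ≤ (1 − 2ρ_max)⁻¹ · ( ∫ L(η̄(x), s(x)) dM − ∫ L(η̄(x), s*(x)) dM ); that is, the clean ℓ-regret of s is at most (1 − 2ρ_max)⁻¹ times its corrupted ℓ-regret. -/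

import Mathlib

open MeasureTheory

/-!
When `ℓ₁ + ℓ₋₁` is constant, the conditional regret of `v` against `w` at probability `p` is
`(2p - 1)(ℓ₁ v - ℓ₁ w)`, which is affine in `p` and vanishes at `p = 1/2`. Flipping labels with
probability `ρ` maps `p` to `(1 - 2ρ) p + ρ`, so it scales every conditional regret by
`1 - 2ρ ≥ 1 - 2ρ_max > 0`. Since `s*` is Bayes-optimal for the noisy distribution, the noisy
regrets are nonnegative, so the clean ones are too and are at most `(1 - 2ρ_max)⁻¹` times the
noisy ones pointwise; integrating gives the theorem.
-/

def condRisk (ℓpos ℓneg : ℝ → ℝ) (p v : ℝ) : ℝ := p * ℓpos v + (1 - p) * ℓneg v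

section condRisk

variable {ℓpos ℓneg : ℝ → ℝ} {C : ℝ}

theorem condRisk_sub_condRisk_of_add_eq_const (hsum : ∀ v, ℓpos v + ℓneg v = C)
    (p v w : ℝ) :
    condRisk ℓpos ℓneg p v - condRisk ℓpos ℓneg p w = (2 * p - 1) * (ℓpos v - ℓpos w) := by
  have hv : ℓneg v = C - ℓpos v := by linarith [hsum v]
  have hw : ℓneg w = C - ℓpos w := by linarith [hsum w]
  rw [condRisk, condRisk, hv, hw]
  ring

theorem condRisk_noisy_sub_condRisk_noisy (hsum : ∀ v, ℓpos v + ℓneg v = C)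
    (ρ p v w : ℝ) :
    condRisk ℓpos ℓneg ((1 - 2 * ρ) * p + ρ) v - condRisk ℓpos ℓneg ((1 - 2 * ρ) * p + ρ) w
      = (1 - 2 * ρ) * (condRisk ℓpos ℓneg p v - condRisk ℓpos ℓneg p w) := by
  rw [condRisk_sub_condRisk_of_add_eq_const hsum, condRisk_sub_condRisk_of_add_eq_const hsum]
  ring

theorem condRisk_regret_le_inv_mul_noisy_regret (hsum : ∀ v, ℓpos v + ℓneg v = C)
    {ρ r : ℝ} (hρr : ρ ≤ r) (hr : r < 1 / 2) {p v w : ℝ}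
    (hopt : condRisk ℓpos ℓneg ((1 - 2 * ρ) * p + ρ) w
      ≤ condRisk ℓpos ℓneg ((1 - 2 * ρ) * p + ρ) v) :
    condRisk ℓpos ℓneg p v - condRisk ℓpos ℓneg p w
      ≤ (1 - 2 * r)⁻¹ * (condRisk ℓpos ℓneg ((1 - 2 * ρ) * p + ρ) v
        - condRisk ℓpos ℓneg ((1 - 2 * ρ) * p + ρ) w) := by
  have hr_pos : 0 < 1 - 2 * r := by linarith
  have hρ_pos : 0 < 1 - 2 * ρ := by linarith
  rw [← sub_nonneg, condRisk_noisy_sub_condRisk_noisy hsum] at hopt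
  have hregret : 0 ≤ condRisk ℓpos ℓneg p v - condRisk ℓpos ℓneg p w :=
    nonneg_of_mul_nonneg_right hopt hρ_pos
  rw [condRisk_noisy_sub_condRisk_noisy hsum, le_inv_mul_iff₀ hr_pos]
  exact mul_le_mul_of_nonneg_right (by linarith) hregret

end condRisk

theorem integral_sub_le_mul_integral_sub {X : Type*} [MeasurableSpace X] {μ : Measure X}
    {f₁ f₂ g₁ g₂ : X → ℝ} {c : ℝ} (hf₁ : Integrable f₁ μ) (hf₂ : Integrable f₂ μ)
    (hg₁ : Integrable g₁ μ) (hg₂ : Integrable g₂ μ)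
    (h : ∀ᵐ x ∂μ, f₁ x - f₂ x ≤ c * (g₁ x - g₂ x)) :
    ∫ x, f₁ x ∂μ - ∫ x, f₂ x ∂μ ≤ c * (∫ x, g₁ x ∂μ - ∫ x, g₂ x ∂μ) := by
  rw [← integral_sub hf₁ hf₂, ← integral_sub hg₁ hg₂, ← integral_const_mul]
  exact integral_mono_ae (hf₁.sub hf₂) ((hg₁.sub hg₂).const_mul c) h

theorem clean_regret_le_corrupted_regret_general
    {X : Type*} [MeasurableSpace X] (M : Measure X)
    (η f : X → ℝ)
    (ρmax : ℝ) (hfρ : ∀ x, f x ≤ ρmax) (hρ : ρmax < 1 / 2)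
    (ηbar : X → ℝ) (hηbar : ∀ x, ηbar x = (1 - 2 * f x) * η x + f x)
    (lpos lneg : ℝ → ℝ)
    (C : ℝ) (hsum : ∀ v, lpos v + lneg v = C)
    (L : ℝ → ℝ → ℝ) (hL : ∀ p v, L p v = p * lpos v + (1 - p) * lneg v)
    (sstar : X → ℝ)
    (hopt : ∀ (x : X) (v : ℝ), L (ηbar x) (sstar x) ≤ L (ηbar x) v)
    (s : X → ℝ)
    (hint₁ : Integrable (fun x => L (η x) (s x)) M)
    (hint₂ : Integrable (fun x => L (η x) (sstar x)) M)
    (hint₃ : Integrable (fun x => L (ηbar x) (s x)) M)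
    (hint₄ : Integrable (fun x => L (ηbar x) (sstar x)) M) :
    (∫ x, L (η x) (s x) ∂M) - (∫ x, L (η x) (sstar x) ∂M)
      ≤ (1 - 2 * ρmax)⁻¹ *
        ((∫ x, L (ηbar x) (s x) ∂M) - (∫ x, L (ηbar x) (sstar x) ∂M)) := by
  obtain rfl : L = condRisk lpos lneg := funext₂ hL
  refine integral_sub_le_mul_integral_sub hint₁ hint₂ hint₃ hint₄ (ae_of_all _ fun x => ?_)
  have hopt_x := hopt x (s x)
  rw [hηbar] at hopt_x ⊢
  exact condRisk_regret_le_inv_mul_noisy_regret hsum (hfρ x) hρ hopt_x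

/-- Under instance-dependent noise bounded by `ρ_max < 1/2`, for a loss whose
components sum to a constant, the clean `ℓ`-regret of any scorer is at most
`(1 - 2 ρ_max)⁻¹` times its corrupted `ℓ`-regret. -/
theorem clean_regret_le_corrupted_regret
    {X : Type*} [MeasurableSpace X] (M : Measure X) [IsProbabilityMeasure M]
    (η f : X → ℝ) (hη : Measurable η) (hf : Measurable f)
    (hη01 : ∀ x, η x ∈ Set.Icc (0 : ℝ) 1)
    (hf0 : ∀ x, 0 ≤ f x)
    (ρmax : ℝ) (hfρ : ∀ x, f x ≤ ρmax) (hρ : ρmax < 1 / 2)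
    (ηbar : X → ℝ) (hηbar : ∀ x, ηbar x = (1 - 2 * f x) * η x + f x)
    (lpos lneg : ℝ → ℝ) (hlpos : ∀ v, 0 ≤ lpos v) (hlneg : ∀ v, 0 ≤ lneg v)
    (C : ℝ) (hsum : ∀ v, lpos v + lneg v = C)
    (L : ℝ → ℝ → ℝ) (hL : ∀ p v, L p v = p * lpos v + (1 - p) * lneg v)
    (sstar : X → ℝ) (hsstar : Measurable sstar)
    (hopt : ∀ (x : X) (v : ℝ), L (ηbar x) (sstar x) ≤ L (ηbar x) v)
    (s : X → ℝ) (hs : Measurable s)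
    (hint₁ : Integrable (fun x => L (η x) (s x)) M)
    (hint₂ : Integrable (fun x => L (η x) (sstar x)) M)
    (hint₃ : Integrable (fun x => L (ηbar x) (s x)) M)
    (hint₄ : Integrable (fun x => L (ηbar x) (sstar x)) M) :
    (∫ x, L (η x) (s x) ∂M) - (∫ x, L (η x) (sstar x) ∂M)
      ≤ (1 - 2 * ρmax)⁻¹ *
        ((∫ x, L (ηbar x) (s x) ∂M) - (∫ x, L (ηbar x) (sstar x) ∂M)) :=
  clean_regret_le_corrupted_regret_general M η f ρmax hfρ hρ ηbar hηbar lpos lneg C hsum L hL sstar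
    hopt s hint₁ hint₂ hint₃ hint₄
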